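/- For the star S_n with n ≥ 3, there exists an orientation Ḡ (all arcs directed outward from the center) with γ_{2,1}(Ḡ) = 1, while the transpose orientation Ḡᵀ (all arcs directed into the center) satisfies γ_{2,1}(Ḡᵀ) = n − 1. In particular, the directed (t,r) broadcast domination number is not invariant under taking the transpose of a digraph. -/

import Mathlib

open Finset

/-- `DReach A n u v`: there is a directed walk of length `n` from `u` to `v`
in the digraph with arc relation `A`. -/
def DReach {V : Type*} (A : V → V → Prop) : ℕ → V → V → Prop
  | 0, u, v => u = v
  | n + 1, u, v => ∃ w, A u w ∧ DReach A n w v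

/-- The signal a broadcasting vertex `u` of strength `t` sends to `w`:
`t - d(u,w)` where `d` is the directed distance (0 if `d(u,w) ≥ t` or `w` unreachable). -/
noncomputable def dsignal {V : Type*} (A : V → V → Prop) (t : ℕ) (u w : V) : ℕ :=
  sSup {m : ℕ | ∃ n : ℕ, DReach A n u w ∧ m = t - n}

/-- The directed reception at `w` from the broadcast set `S` of strength `t`. -/
noncomputable def dreception {V : Type*} [Fintype V] (A : V → V → Prop) (t : ℕ)
    (S : Finset V) (w : V) : ℕ :=
  ∑ v ∈ S, dsignal A t v w

/-- `S` is a directed `(t,r)` broadcast dominating set of the digraph `A`. -/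
def IsDomSet {V : Type*} [Fintype V] (A : V → V → Prop) (t r : ℕ) (S : Finset V) : Prop :=
  ∀ w : V, r ≤ dreception A t S w

/-- The directed `(t,r)` broadcast domination number of the digraph `A`. -/
noncomputable def gamma {V : Type*} [Fintype V] (A : V → V → Prop) (t r : ℕ) : ℕ :=
  sInf {k : ℕ | ∃ S : Finset V, IsDomSet A t r S ∧ S.card = k}

/-- `A` is an orientation of the simple graph `G`: every arc is along an edge of `G`,
and each edge of `G` is directed in exactly one of the two directions. -/
def IsOrientation {V : Type*} (G : SimpleGraph V) (A : V → V → Prop) : Prop :=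
  (∀ u v, A u v → G.Adj u v) ∧ ∀ u v, G.Adj u v → (A u v ↔ ¬ A v u)

/-- `A₁` is obtained from `A₀` by reversing (flipping) a single arc. -/
def OneFlip {V : Type*} (A₀ A₁ : V → V → Prop) : Prop :=
  ∃ a b, A₀ a b ∧ A₁ b a ∧
    ∀ u v, ¬((u = a ∧ v = b) ∨ (u = b ∧ v = a)) → (A₀ u v ↔ A₁ u v)

/-- The star graph on `n` vertices: vertex with value `0` is the center. -/
def starGraph (n : ℕ) : SimpleGraph (Fin n) where
  Adj u v := u ≠ v ∧ (u.val = 0 ∨ v.val = 0)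
  symm := ⟨by intro u v h; exact ⟨h.1.symm, h.2.symm⟩⟩
  loopless := ⟨by intro u h; exact h.1 rfl⟩

/-
Broadcasting from the center of the out-star reaches every leaf at distance 1, so one vertex
suffices. In the in-star every leaf is a source: the only walk ending at a leaf is the empty one,
so each leaf must broadcast itself, while any single leaf already covers the center.
-/

namespace DReach

variable {V : Type*} {A : V → V → Prop}

theorem eq_of_forall_not_adj {k : ℕ} {u w : V} (hw : ∀ v, ¬A v w) (h : DReach A k u w) :
    u = w := by
  induction k generalizing u with
  | zero => exact h
  | succ k ih =>
    obtain ⟨x, hux, hxw⟩ := h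
    exact absurd (ih hxw ▸ hux) (hw u)

end DReach

section Broadcast

variable {V : Type*} {A : V → V → Prop} {t r : ℕ}

theorem le_dsignal {k : ℕ} {u w : V} (h : DReach A k u w) : t - k ≤ dsignal A t u w :=
  le_csSup ⟨t, by rintro _ ⟨j, -, rfl⟩; exact Nat.sub_le t j⟩ ⟨k, h, rfl⟩

theorem dsignal_eq_zero_of_forall_not_dReach {u w : V} (h : ∀ k, ¬DReach A k u w) :
    dsignal A t u w = 0 := by
  simp [dsignal, h]

variable [Fintype V]

theorem le_dreception {S : Finset V} {k : ℕ} {v w : V} (hv : v ∈ S) (h : DReach A k v w) :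
    t - k ≤ dreception A t S w :=
  (le_dsignal h).trans (single_le_sum (f := fun v => dsignal A t v w) (by simp) hv)

theorem isDomSet_one_of_forall_mem_or_adj (ht : 2 ≤ t) {S : Finset V}
    (h : ∀ w, w ∈ S ∨ ∃ v ∈ S, A v w) : IsDomSet A t 1 S := by
  intro w
  rcases h w with hw | ⟨v, hv, hvw⟩
  · have := le_dreception (t := t) hw (show DReach A 0 w w from rfl)
    omega
  · have := le_dreception (t := t) hv (show DReach A 1 v w from ⟨w, hvw, rfl⟩)
    omega

theorem IsDomSet.nonempty [Nonempty V] {S : Finset V} (hS : IsDomSet A t r S) (hr : 0 < r) :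
    S.Nonempty := by
  rw [nonempty_iff_ne_empty]
  rintro rfl
  have := hS (Classical.arbitrary V)
  simp [dreception] at this
  omega

theorem IsDomSet.mem_of_forall_not_adj {S : Finset V} (hS : IsDomSet A t r S) (hr : 0 < r)
    {w : V} (hw : ∀ v, ¬A v w) : w ∈ S := by
  by_contra hwS
  have hzero : dreception A t S w = 0 :=
    sum_eq_zero fun v hv => dsignal_eq_zero_of_forall_not_dReach fun k h =>
      hwS (h.eq_of_forall_not_adj hw ▸ hv)
  have := hS w
  omega

theorem gamma_eq_card {S : Finset V} (hS : IsDomSet A t r S)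
    (hmin : ∀ T, IsDomSet A t r T → S.card ≤ T.card) : gamma A t r = S.card :=
  le_antisymm (Nat.sInf_le ⟨S, hS, rfl⟩)
    (le_csInf ⟨_, S, hS, rfl⟩ (by rintro _ ⟨T, hT, rfl⟩; exact hmin T hT))

end Broadcast

section Star

def outStar (n : ℕ) (u v : Fin n) : Prop :=
  u.val = 0 ∧ v.val ≠ 0

variable {n : ℕ}

theorem isOrientation_outStar : IsOrientation (starGraph n) (outStar n) := by
  refine ⟨fun u v ⟨hu, hv⟩ => ⟨fun h => hv (h ▸ hu), Or.inl hu⟩, ?_⟩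
  rintro u v ⟨huv, hu | hv⟩ <;> have := Fin.val_ne_of_ne huv <;> simp only [outStar] <;> omega

theorem gamma_outStar (hn : 0 < n) : gamma (outStar n) 2 1 = 1 := by
  have : Nonempty (Fin n) := ⟨⟨0, hn⟩⟩
  refine gamma_eq_card (S := {⟨0, hn⟩}) ?_ fun T hT => (hT.nonempty one_pos).card_pos
  refine isDomSet_one_of_forall_mem_or_adj le_rfl fun w => ?_
  by_cases hw : w.val = 0
  · exact Or.inl (mem_singleton.2 (Fin.ext hw))
  · exact Or.inr ⟨⟨0, hn⟩, mem_singleton_self _, rfl, hw⟩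

theorem gamma_flip_outStar (hn : 2 ≤ n) : gamma (flip (outStar n)) 2 1 = n - 1 := by
  let c : Fin n := ⟨0, by omega⟩
  have hleaves : (univ.erase c).card = n - 1 := by simp
  have hleaf {w : Fin n} : w ∈ univ.erase c ↔ w.val ≠ 0 := by
    simp [c, Fin.ext_iff]
  rw [← hleaves]
  refine gamma_eq_card ?_ fun T hT => card_le_card fun w hw =>
    hT.mem_of_forall_not_adj one_pos fun v hvw => hleaf.1 hw hvw.1
  refine isDomSet_one_of_forall_mem_or_adj le_rfl fun w => ?_
  by_cases hw : w.val = 0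
  · exact Or.inr ⟨⟨1, by omega⟩, hleaf.2 one_ne_zero, hw, one_ne_zero⟩
  · exact Or.inl (hleaf.2 hw)

end Star

theorem stmt13 (n : ℕ) (hn : 3 ≤ n) :
    IsOrientation (starGraph n) (fun u v => u.val = 0 ∧ v.val ≠ 0) ∧
    gamma (fun u v : Fin n => u.val = 0 ∧ v.val ≠ 0) 2 1 = 1 ∧
    gamma (fun u v : Fin n => v.val = 0 ∧ u.val ≠ 0) 2 1 = n - 1 :=
  ⟨isOrientation_outStar, gamma_outStar (by omega), gamma_flip_outStar (by omega)⟩
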